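/- Let ψ₁, ψ₂, μ, v₁ ∈ ℝ with (ψ₁ − μ, ψ₂) ≠ (0, 0). Suppose −v₁ = (ψ₁ − μ)/√((ψ₁ − μ)² + ψ₂²) and |v₁| < 1. Then ψ₂ ≠ 0 and μ = ψ₁ + |ψ₂|·v₁/√(1 − v₁²). -/
import Mathlib


/-- Formula (4) of the paper: on boundary arcs, from
`−v₁ = (ψ₁ − μ)/√((ψ₁ − μ)² + ψ₂²)` and `|v₁| < 1` one deduces `ψ₂ ≠ 0` and
`μ = ψ₁ + |ψ₂| v₁ / √(1 − v₁²)`. -/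
theorem measure_multiplier_formula
    (ψ₁ ψ₂ μ v₁ : ℝ) (hne : (ψ₁ - μ, ψ₂) ≠ (0, 0))
    (h : -v₁ = (ψ₁ - μ) / Real.sqrt ((ψ₁ - μ) ^ 2 + ψ₂ ^ 2))
    (hv : |v₁| < 1) :
    ψ₂ ≠ 0 ∧ μ = ψ₁ + |ψ₂| * v₁ / Real.sqrt (1 - v₁ ^ 2) := by
  set a := ψ₁ - μ with ha
  set r := Real.sqrt (a ^ 2 + ψ₂ ^ 2) with hrdef
  have hb : ψ₂ ≠ 0 := by
    intro hb0
    have haz : a ≠ 0 := by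
      intro h0; apply hne; simp [h0, hb0, ha]
    have : r = |a| := by
      rw [hrdef, hb0]; simp [Real.sqrt_sq_eq_abs]
    rw [this] at h
    rcases abs_cases a with ⟨he, _⟩ | ⟨he, _⟩
    · rw [he, div_self haz] at h
      have : |v₁| = 1 := by rw [← abs_neg, h]; simp
      linarith
    · rw [he] at h
      rw [div_neg, div_self haz] at h
      have : |v₁| = 1 := by rw [← abs_neg, h]; simp
      linarith
  have hrpos : 0 < r := by
    apply Real.sqrt_pos.mpr
    positivity
  have hr2 : r ^ 2 = a ^ 2 + ψ₂ ^ 2 := Real.sq_sqrt (by positivity)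
  have hv1 : v₁ = -(a / r) := by linarith [h]
  have h1 : 1 - v₁ ^ 2 = ψ₂ ^ 2 / r ^ 2 := by
    rw [hv1]
    field_simp
    linarith
  have hsq : Real.sqrt (1 - v₁ ^ 2) = |ψ₂| / r := by
    rw [h1, Real.sqrt_div (sq_nonneg ψ₂), Real.sqrt_sq_eq_abs, Real.sqrt_sq hrpos.le]
  refine ⟨hb, ?_⟩
  have : |ψ₂| * v₁ / Real.sqrt (1 - v₁ ^ 2) = -a := by
    rw [hsq, hv1]
    field_simp
  rw [this]; linarith [ha]
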